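/- arXiv:math/0612657 — 5 statements merged into one kernel-verified Lean document; each statement's English description precedes it below -/
import Mathlib

section
/- Let f : Z → W be a proper morphism of schemes of finite type over a field k, and let w ∈ W be a closed point whose set-theoretic fibre f⁻¹(w) consists of a single point z. If the induced homomorphism of local rings f^♯_z : O_{W,w} → O_{Z,z} is an isomorphism, then there exist open neighbourhoods U of z in Z and V of w in W with f⁻¹(V) ⊆ U such that f restricts to an isomorphism U → V (so the birational inverse f⁻¹ is defined and a local isomorphism at w). -/
open AlgebraicGeometry CategoryTheory

/-- `f` restricts to an isomorphism from the open subscheme `U` onto the open subscheme `V`. -/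
def Scheme.RestrictsToIsoOn {Z W : AlgebraicGeometry.Scheme}
    (f : Z ⟶ W) (U : Z.Opens) (V : W.Opens) : Prop :=
  ∃ e : U ≤ f ⁻¹ᵁ V, IsIso (f.resLE V U e)

/-!
As `W` is locally noetherian and `f` is of finite type, the inverse of the stalk map spreads out
to a morphism `g` on a neighbourhood of `w`. Both schemes are germ-injective, so `g ≫ f` and
`f ≫ g` agree with the inclusions near `w` and near `z`, which makes `f` an isomorphism between
neighbourhoods `U₀ ∋ z` and `V₀ ∋ w`. Since `f` is closed and `f⁻¹(w) = {z} ⊆ U₀`, the points of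
`V₀` outside `f(Z \ U₀)` form a neighbourhood of `w` whose preimage lies in `U₀`, and the
isomorphism restricts to it.
-/

lemma IsClosedMap.exists_isOpen_preimage_subset {X Y : Type*} [TopologicalSpace X]
    [TopologicalSpace Y] {f : X → Y} (hf : IsClosedMap f) {y : Y} {U : Set X} (hU : IsOpen U)
    (hyU : f ⁻¹' {y} ⊆ U) : ∃ V : Set Y, IsOpen V ∧ y ∈ V ∧ f ⁻¹' V ⊆ U :=
  ⟨(f '' Uᶜ)ᶜ, (hf _ hU.isClosed_compl).isOpen_compl,
    fun ⟨_, hxU, hxy⟩ ↦ hxU (hyU hxy), fun x hx ↦ by_contra fun hxU ↦ hx ⟨x, hxU, rfl⟩⟩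

section

variable {X Y : Scheme}

lemma Scheme.RestrictsToIsoOn.inf_preimage {f : X ⟶ Y} {U : X.Opens} {V : Y.Opens}
    (h : Scheme.RestrictsToIsoOn f U V) {V' : Y.Opens} (hV' : V' ≤ V) :
    Scheme.RestrictsToIsoOn f (U ⊓ f ⁻¹ᵁ V') V' := by
  obtain ⟨e, _⟩ := h
  refine ⟨inf_le_right, ?_⟩
  have : IsPullback (f.resLE V' (U ⊓ f ⁻¹ᵁ V') inf_le_right) (X.homOfLE inf_le_left)
      (Y.homOfLE hV') (f.resLE V U e) := by
    refine IsOpenImmersion.isPullback _ _ _ _ (by simp) ?_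
    rw [Scheme.opensRange_homOfLE, Scheme.opensRange_homOfLE, ← Scheme.Hom.comp_preimage,
      Scheme.Hom.resLE_comp_ι, Scheme.Hom.comp_preimage]
    ext x
    simpa using fun _ ↦ U.ι_apply x ▸ x.2
  exact this.isIso_fst_of_isIso

lemma Scheme.restrictsToIsoOn_of_comp_eq_ι {f : X ⟶ Y} {U : X.Opens} {V : Y.Opens}
    (e : U ≤ f ⁻¹ᵁ V) (g : V.toScheme ⟶ X) (hgU : ∀ y, g y ∈ U) (hgf : g ≫ f = V.ι)
    (hfg : f.resLE V U e ≫ g = U.ι) : Scheme.RestrictsToIsoOn f U V := by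
  let g' := IsOpenImmersion.lift U.ι g (by rintro _ ⟨y, rfl⟩; simpa using hgU y)
  have hg' : g' ≫ U.ι = g := IsOpenImmersion.lift_fac _ _ _
  refine ⟨e, ⟨g', ?_, ?_⟩⟩
  · rw [← cancel_mono U.ι, Category.assoc, hg', hfg, Category.id_comp]
  · rw [← cancel_mono V.ι, Category.assoc, Scheme.Hom.resLE_comp_ι, ← Category.assoc, hg', hgf,
      Category.id_comp]

lemma exists_homOfLE_comp_eq_of_fromSpecStalkOfMem_comp_eq {T : Scheme} {x : X}
    [X.IsGermInjectiveAt x] {U : X.Opens} (hxU : x ∈ U) {p q : U.toScheme ⟶ T}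
    (h : U.fromSpecStalkOfMem x hxU ≫ p = U.fromSpecStalkOfMem x hxU ≫ q) :
    ∃ (U' : X.Opens) (hU' : U' ≤ U), x ∈ U' ∧ X.homOfLE hU' ≫ p = X.homOfLE hU' ≫ q := by
  have : U.toScheme.IsGermInjectiveAt ⟨x, hxU⟩ :=
    (isGermInjectiveAt_iff_of_isOpenImmersion (f := U.ι)).mp ‹_›
  have : IsIso (U.ι.stalkMap ⟨x, hxU⟩) :=
    (IsOpenImmersion.iff_isIso_stalkMap.mp inferInstance).2 _
  obtain ⟨O, hxO, hO⟩ := spread_out_unique_of_isGermInjective' (x := (⟨x, hxU⟩ : U)) p q (by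
    rw [← cancel_epi (Spec.map (inv (U.ι.stalkMap ⟨x, hxU⟩)))]
    simpa [Scheme.Opens.fromSpecStalkOfMem] using h)
  have hι : X.homOfLE (U.ι_image_le O) = (U.ι.isoImage O).inv ≫ O.ι := by simp
  exact ⟨U.ι ''ᵁ O, U.ι_image_le O, ⟨_, hxO, rfl⟩, by rw [hι, Category.assoc, hO, Category.assoc]⟩

lemma exists_restrictsToIsoOn_of_local_inverse {f : X ⟶ Y} {x : X} {U₁ : X.Opens}
    {V₀ V₁ : Y.Opens} (hxU₁ : x ∈ U₁) (hxV₁ : f x ∈ V₁) (hU₁ : U₁ ≤ f ⁻¹ᵁ V₀) (hV₁ : V₁ ≤ V₀)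
    (g : V₀.toScheme ⟶ X) (hgf : Y.homOfLE hV₁ ≫ g ≫ f = V₁.ι)
    (hfg : f.resLE V₀ U₁ hU₁ ≫ g = U₁.ι) :
    ∃ U V, x ∈ U ∧ f x ∈ V ∧ Scheme.RestrictsToIsoOn f U V := by
  have hxV₀ : f x ∈ V₀ := hV₁ hxV₁
  have hgx : g ⟨f x, hxV₀⟩ = x := by
    have : g (f.resLE V₀ U₁ hU₁ ⟨x, hxU₁⟩) = x := congr($(hfg).base ⟨x, hxU₁⟩)
    rwa [show f.resLE V₀ U₁ hU₁ ⟨x, hxU₁⟩ = ⟨f x, hxV₀⟩ from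
      Subtype.ext (f.coe_resLE_apply _ _)] at this
  let V : Y.Opens := V₁ ⊓ V₀.ι ''ᵁ (g ⁻¹ᵁ U₁)
  have hVV₀ : V ≤ V₀ := inf_le_left.trans hV₁
  have hgfV : Y.homOfLE hVV₀ ≫ g ≫ f = V.ι := by
    rw [← Y.homOfLE_homOfLE inf_le_left hV₁, Category.assoc, hgf, Scheme.homOfLE_ι]
  have hxV : f x ∈ V := ⟨hxV₁, ⟨f x, hxV₀⟩, show g _ ∈ U₁ by rwa [hgx], rfl⟩
  refine ⟨U₁ ⊓ f ⁻¹ᵁ V, V, ⟨hxU₁, hxV⟩, hxV,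
    Scheme.restrictsToIsoOn_of_comp_eq_ι inf_le_right (Y.homOfLE hVV₀ ≫ g) ?_ hgfV ?_⟩
  · intro y
    obtain ⟨-, a, ha, hay⟩ := y.2
    obtain rfl : a = Y.homOfLE hVV₀ y := Subtype.ext (hay.trans (Y.homOfLE_apply hVV₀ y).symm)
    refine ⟨ha, ?_⟩
    show f (g (Y.homOfLE hVV₀ y)) ∈ V
    rw [show f (g (Y.homOfLE hVV₀ y)) = V.ι y from congr($(hgfV).base y)]
    exact y.2
  · rw [Scheme.Hom.resLE_map_assoc, ← Scheme.Hom.map_resLE f hU₁ inf_le_left, Category.assoc,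
      hfg, Scheme.homOfLE_ι]

theorem exists_restrictsToIsoOn_of_isIso_stalkMap (f : X ⟶ Y) [LocallyOfFiniteType f] (x : X)
    [X.IsGermInjectiveAt x] [Y.IsGermInjectiveAt (f x)] [IsIso (f.stalkMap x)] :
    ∃ U V, x ∈ U ∧ f x ∈ V ∧ Scheme.RestrictsToIsoOn f U V := by
  set φ := Spec.map (inv (f.stalkMap x)) ≫ X.fromSpecStalk x
  have hφ : φ ≫ f = Y.fromSpecStalk (f x) := by
    rw [Category.assoc, ← Scheme.SpecMap_stalkMap_fromSpecStalk, ← Spec.map_comp_assoc,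
      IsIso.hom_inv_id, Spec.map_id, Category.id_comp]
  obtain ⟨V₀, hxV₀, g, hg, -⟩ :=
    spread_out_of_isGermInjective' (𝟙 Y) f (x := f x) φ (by rw [hφ, Category.comp_id])
  obtain ⟨V₁, hV₁, hxV₁, hgf⟩ := exists_homOfLE_comp_eq_of_fromSpecStalkOfMem_comp_eq hxV₀
    (p := g ≫ f) (q := V₀.ι) (by rw [← Category.assoc, ← hg, hφ, Scheme.Opens.fromSpecStalkOfMem_ι])
  have hxfV₀ : x ∈ f ⁻¹ᵁ V₀ := hxV₀
  have hres : (f ⁻¹ᵁ V₀).fromSpecStalkOfMem x hxfV₀ ≫ f.resLE V₀ _ le_rfl =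
      Spec.map (f.stalkMap x) ≫ V₀.fromSpecStalkOfMem _ hxV₀ := by
    rw [← cancel_mono V₀.ι, Category.assoc, Category.assoc, Scheme.Hom.resLE_comp_ι,
      Scheme.Opens.fromSpecStalkOfMem_ι_assoc, Scheme.Opens.fromSpecStalkOfMem_ι,
      Scheme.SpecMap_stalkMap_fromSpecStalk]
  obtain ⟨U₁, hU₁, hxU₁, hfg⟩ := exists_homOfLE_comp_eq_of_fromSpecStalkOfMem_comp_eq hxfV₀
    (p := f.resLE V₀ _ le_rfl ≫ g) (q := (f ⁻¹ᵁ V₀).ι) (by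
      rw [← Category.assoc, hres, Category.assoc, ← hg, Scheme.Opens.fromSpecStalkOfMem_ι,
        ← Spec.map_comp_assoc, IsIso.inv_hom_id, Spec.map_id, Category.id_comp])
  simp only [Scheme.Hom.map_resLE_assoc, Scheme.homOfLE_ι] at hgf hfg
  exact exists_restrictsToIsoOn_of_local_inverse hxU₁ hxV₁ hU₁ hV₁ g hgf hfg

end

theorem statement_1_general
    (k : Type) [Field k]
    (Z W : AlgebraicGeometry.Scheme)
    (sW : W ⟶ Spec (CommRingCat.of k))
    [LocallyOfFiniteType sW]
    (f : Z ⟶ W) [IsProper f]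
    (w : W)
    (z : Z) (hfib : f.base ⁻¹' {w} = {z})
    (hstalk : IsIso (f.stalkMap z)) :
    ∃ (U : Z.Opens) (V : W.Opens), z ∈ U ∧ w ∈ V ∧
      f.base ⁻¹' (V : Set W) ⊆ (U : Set Z) ∧ Scheme.RestrictsToIsoOn f U V := by
  have : IsLocallyNoetherian W := LocallyOfFiniteType.isLocallyNoetherian sW
  have : IsLocallyNoetherian Z := LocallyOfFiniteType.isLocallyNoetherian f
  obtain rfl : f z = w := hfib.symm.subset rfl
  obtain ⟨U₀, V₀, hzU₀, hzV₀, hiso⟩ := exists_restrictsToIsoOn_of_isIso_stalkMap f z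
  obtain ⟨V', hV', hzV', hV'U₀⟩ :=
    f.isClosedMap.exists_isOpen_preimage_subset U₀.2 (hfib ▸ Set.singleton_subset_iff.2 hzU₀)
  let V : W.Opens := V₀ ⊓ ⟨V', hV'⟩
  exact ⟨U₀ ⊓ f ⁻¹ᵁ V, V, ⟨hzU₀, hzV₀, hzV'⟩, ⟨hzV₀, hzV'⟩, fun x hx ↦ ⟨hV'U₀ hx.2, hx⟩,
    hiso.inf_preimage inf_le_left⟩

/-- Let `f : Z → W` be a proper morphism of finite type schemes over a field
`k`, and let `w ∈ W` be a closed point whose set-theoretic fibre `f⁻¹(w)` consists of a single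
point `z`.  If the induced homomorphism of local rings `O_{W,w} → O_{Z,z}` is an isomorphism,
then there are open neighbourhoods `U` of `z` and `V` of `w` with `f⁻¹(V) ⊆ U` such that `f`
restricts to an isomorphism `U → V`. -/
theorem statement_1
    (k : Type) [Field k]
    (Z W : AlgebraicGeometry.Scheme)
    (sZ : Z ⟶ Spec (CommRingCat.of k)) (sW : W ⟶ Spec (CommRingCat.of k))
    [LocallyOfFiniteType sZ] [QuasiCompact sZ]
    [LocallyOfFiniteType sW] [QuasiCompact sW]
    (f : Z ⟶ W) (hfk : f ≫ sW = sZ) [IsProper f]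
    (w : W) (hwclosed : IsClosed ({w} : Set W))
    (z : Z) (hfib : f.base ⁻¹' {w} = {z})
    (hstalk : IsIso (f.stalkMap z)) :
    ∃ (U : Z.Opens) (V : W.Opens), z ∈ U ∧ w ∈ V ∧
      f.base ⁻¹' (V : Set W) ⊆ (U : Set Z) ∧ Scheme.RestrictsToIsoOn f U V :=
  statement_1_general k Z W sW f w z hfib hstalk
end

section
/- Let f : Z → W be a proper morphism of schemes of finite type over a field k, and let w ∈ W be a closed point whose set-theoretic fibre f⁻¹(w) consists of a single point z. If the canonical morphism O_W → f_*(O_Z) is an isomorphism, then there exist open neighbourhoods U of z in Z and V of w in W with f⁻¹(V) ⊆ U such that f restricts to an isomorphism U → V (so the birational inverse f⁻¹ is defined and a local isomorphism at w). -/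
/-!
Since `f` is closed and its fibre over `w` is `{z}`, every neighbourhood of `z` contains the
full preimage of a small enough neighbourhood of `w`. Taking an affine open `U₀ ∋ z`, an affine
`V ∋ w` with `f⁻¹(V) ⊆ U₀`, and a basic open `D(a) ∋ z` of `U₀` inside `f⁻¹(V)`, the isomorphism
`O_W(V) ≅ O_Z(f⁻¹V)` turns `a` into a section `s` with `f⁻¹(D(s)) = D(a)`. Over `D(s)` the map `f`
is then a morphism of affine schemes that is an isomorphism on global sections, hence an
isomorphism.
-/

open AlgebraicGeometry CategoryTheory

namespace AlgebraicGeometry.Scheme.Hom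

variable {X Y : Scheme} (f : X ⟶ Y)

theorem exists_isAffineOpen_mem_preimage_le (hf : IsClosedMap f.base) {U : X.Opens} {y : Y}
    (hU : f.base ⁻¹' {y} ⊆ U) : ∃ V : Y.Opens, IsAffineOpen V ∧ y ∈ V ∧ f ⁻¹ᵁ V ≤ U := by
  have hy : y ∈ (f.base '' (↑U)ᶜ)ᶜ := by
    rintro ⟨x, hxU, rfl⟩
    exact hxU (hU rfl)
  obtain ⟨_, ⟨V, hV, rfl⟩, hyV, hVU⟩ :=
    Y.isBasis_affineOpens.exists_subset_of_mem_open hy (hf _ U.2.isClosed_compl).isOpen_compl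
  exact ⟨V, hV, hyV, fun x hx ↦ by_contra fun hxU ↦ hVU hx ⟨x, hxU, rfl⟩⟩

theorem preimage_basicOpen_inv_app {V : Y.Opens} [IsIso (f.app V)] (a : Γ(X, f ⁻¹ᵁ V)) :
    f ⁻¹ᵁ Y.basicOpen (inv (f.app V) a) = X.basicOpen a := by
  rw [preimage_basicOpen, ← CommRingCat.comp_apply, IsIso.inv_hom_id, CommRingCat.id_apply]

theorem exists_isAffineOpen_mem_isAffineOpen_preimage (hf : IsClosedMap f.base) [IsIso f.c]
    {U : X.Opens} (hU : IsAffineOpen U) {x : X} (hxU : f.base ⁻¹' {f.base x} ⊆ U) :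
    ∃ V : Y.Opens, IsAffineOpen V ∧ f.base x ∈ V ∧ IsAffineOpen (f ⁻¹ᵁ V) := by
  obtain ⟨V, hV, hxV, hVU⟩ := f.exists_isAffineOpen_mem_preimage_le hf hxU
  obtain ⟨a, haV, hxa⟩ := hU.exists_basicOpen_le (V := f ⁻¹ᵁ V) ⟨x, hxV⟩ (hxU rfl)
  set s := inv (f.app V) (X.presheaf.map (homOfLE hVU).op a)
  have hs : f ⁻¹ᵁ Y.basicOpen s = X.basicOpen a := by
    rw [preimage_basicOpen_inv_app, X.basicOpen_res, inf_eq_right.mpr haV]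
  exact ⟨Y.basicOpen s, hV.basicOpen s, show x ∈ f ⁻¹ᵁ Y.basicOpen s from hs ▸ hxa,
    hs ▸ hU.basicOpen a⟩

theorem isIso_of_isIso_appTop [IsAffine X] [IsAffine Y] [IsIso f.appTop] : IsIso f :=
  (MorphismProperty.arrow_mk_iso_iff (.isomorphisms _) (arrowIsoSpecΓOfIsAffine f)).mpr
    (inferInstanceAs (IsIso (Spec.map f.appTop)))

theorem isIso_resLE_of_isAffineOpen {U : X.Opens} {V : Y.Opens} (hU : IsAffineOpen U)
    (hV : IsAffineOpen V) (e : U ≤ f ⁻¹ᵁ V) [IsIso (f.appLE V U e)] : IsIso (f.resLE V U e) := by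
  have : IsAffine U := hU
  have : IsAffine V := hV
  have : IsIso (f.resLE V U e).appTop :=
    ((MorphismProperty.isomorphisms _).arrow_mk_iso_iff (arrowResLEAppIso f V U e)).mpr ‹_›
  exact isIso_of_isIso_appTop _

end AlgebraicGeometry.Scheme.Hom

theorem statement_2_general
    (Z W : AlgebraicGeometry.Scheme)
    (f : Z ⟶ W) [IsProper f]
    (w : W)
    (z : Z) (hfib : f.base ⁻¹' {w} = {z})
    (hpush : IsIso f.c) :
    ∃ (U : Z.Opens) (V : W.Opens), z ∈ U ∧ w ∈ V ∧
      f.base ⁻¹' (V : Set W) ⊆ (U : Set Z) ∧ Scheme.RestrictsToIsoOn f U V := by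
  obtain rfl : f.base z = w := hfib.ge rfl
  obtain ⟨U₀, hU₀, hzU₀, -⟩ :=
    exists_isAffineOpen_mem_and_subset (TopologicalSpace.Opens.mem_top z)
  obtain ⟨V, hV, hzV, hfV⟩ := f.exists_isAffineOpen_mem_isAffineOpen_preimage f.isClosedMap hU₀
    (hfib.trans_subset (Set.singleton_subset_iff.mpr hzU₀))
  have : IsIso (f.appLE V (f ⁻¹ᵁ V) le_rfl) := by
    rw [Scheme.Hom.appLE_eq_app]
    infer_instance
  exact ⟨f ⁻¹ᵁ V, V, hzV, hzV, subset_rfl, le_rfl, f.isIso_resLE_of_isAffineOpen hfV hV le_rfl⟩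

/-- Let `f : Z → W` be a proper morphism of finite type schemes over a field
`k`, and let `w ∈ W` be a closed point whose set-theoretic fibre `f⁻¹(w)` consists of a single
point `z`.  If the canonical morphism `O_W → f_*(O_Z)` is an isomorphism, then there are open
neighbourhoods `U` of `z` and `V` of `w` with `f⁻¹(V) ⊆ U` such that `f` restricts to an
isomorphism `U → V`. -/
theorem statement_2
    (k : Type) [Field k]
    (Z W : AlgebraicGeometry.Scheme)
    (sZ : Z ⟶ Spec (CommRingCat.of k)) (sW : W ⟶ Spec (CommRingCat.of k))
    [LocallyOfFiniteType sZ] [QuasiCompact sZ]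
    [LocallyOfFiniteType sW] [QuasiCompact sW]
    (f : Z ⟶ W) (hfk : f ≫ sW = sZ) [IsProper f]
    (w : W) (hwclosed : IsClosed ({w} : Set W))
    (z : Z) (hfib : f.base ⁻¹' {w} = {z})
    (hpush : IsIso f.c) :
    ∃ (U : Z.Opens) (V : W.Opens), z ∈ U ∧ w ∈ V ∧
      f.base ⁻¹' (V : Set W) ⊆ (U : Set Z) ∧ Scheme.RestrictsToIsoOn f U V :=
  statement_2_general Z W f w z hfib hpush
end

section
/- Let A = ⊕_{n≥0} A_n be an ℕ-graded k-algebra, L a field extension of k, and M = ⊕_{s≥0} M_s a graded (L, A)-bimodule (the left L-action commuting with the right A-action) such that each M_s is a one-dimensional L-vector space and M_s A_u ⊆ M_{s+u} for all s, u. Suppose that the two-sided ideal P = {a ∈ A : Ma = 0} satisfies P = ann_A(M_s) = {a ∈ A : M_s a = 0} for every s ≥ 0. Then P is completely prime on homogeneous elements: whenever a ∈ A_u and b ∈ A_v are homogeneous with a ∉ P and b ∉ P, one has ab ∉ P (equivalently, A/P has no nonzero homogeneous zero divisors). -/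
/-! With `a ∉ P = ann(M₀)` pick `m ∈ M₀` with `m a ≠ 0`; then `m a` spans the line `M_u`.
If `a b ∈ P` then `(m a) b = 0`, and right multiplication by `b` is `L`-linear, so `b` kills all
of `M_u`, i.e. `b ∈ ann(M_u) = P`. -/

open MulOpposite

theorem Submodule.le_ker_of_finrank_eq_one_of_map_eq_zero {K V W : Type*} [Field K]
    [AddCommGroup V] [Module K V] [AddCommGroup W] [Module K W]
    {N : Submodule K V} (hN : Module.finrank K N = 1) (f : V →ₗ[K] W)
    {x : V} (hxN : x ∈ N) (hx : x ≠ 0) (hfx : f x = 0) : N ≤ LinearMap.ker f := by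
  intro y hyN
  obtain ⟨c, hc⟩ :=
    (finrank_eq_one_iff_of_nonzero' (⟨x, hxN⟩ : N) (by simpa using hx)).mp hN ⟨y, hyN⟩
  have hcy : c • x = y := congrArg Subtype.val hc
  rw [LinearMap.mem_ker, ← hcy, map_smul, hfx, smul_zero]

theorem statement_10_general
    (k : Type) [Field k]
    (A : Type) [Ring A] [Algebra k A]
    (𝒜 : ℕ → Submodule k A)
    (L : Type) [Field L]
    (M : Type) [AddCommGroup M] [Module L M] [Module Aᵐᵒᵖ M]
    (hbimod : ∀ (ℓ : L) (a : Aᵐᵒᵖ) (m : M), a • (ℓ • m) = ℓ • (a • m))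
    (ℳ : ℕ → Submodule L M)
    (honedim : ∀ s : ℕ, Module.finrank L (ℳ s) = 1)
    (hmul : ∀ (s u : ℕ) (m : M) (a : A), m ∈ ℳ s → a ∈ 𝒜 u → (op a) • m ∈ ℳ (s + u))
    (P : Set A)
    (hP : P = {a : A | ∀ m : M, (op a) • m = 0})
    (hPs : ∀ s : ℕ, P = {a : A | ∀ m ∈ ℳ s, (op a) • m = 0}) :
    ∀ (u v : ℕ) (a b : A), a ∈ 𝒜 u → b ∈ 𝒜 v → a ∉ P → b ∉ P → a * b ∉ P := by
  intro u v a b ha _ haP hbP habP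
  have : SMulCommClass Aᵐᵒᵖ L M := ⟨fun a ℓ m => hbimod ℓ a m⟩
  obtain ⟨m, hm, hma⟩ : ∃ m ∈ ℳ 0, op a • m ≠ 0 := by simpa [hPs 0] using haP
  have hmaU : op a • m ∈ ℳ u := by simpa using hmul 0 u m a hm ha
  have hmab : op b • op a • m = 0 := by
    rw [← mul_smul, ← op_mul]
    exact (hP ▸ habP) m
  refine hbP ((hPs u).symm ▸ fun n hn => ?_)
  exact Submodule.le_ker_of_finrank_eq_one_of_map_eq_zero (honedim u)
    (DistribSMul.toLinearMap L M (op b)) hmaU hma hmab hn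

/-- Let `A = ⊕ₙ Aₙ` be an `ℕ`-graded `k`-algebra, `L` a field extension of
`k`, and `M = ⊕ₛ Mₛ` a graded `(L, A)`-bimodule (the left `L`-action commuting with the right
`A`-action, encoded as an `Aᵐᵒᵖ`-action) such that each `Mₛ` is a one-dimensional `L`-vector
space and `Mₛ Aᵤ ⊆ M_{s+u}`.  Suppose the two-sided ideal `P = {a : A | M a = 0}` satisfies
`P = ann_A (Mₛ)` for every `s`.  Then `P` is completely prime on homogeneous elements. -/
theorem statement_10
    (k : Type) [Field k]
    (A : Type) [Ring A] [Algebra k A]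
    (𝒜 : ℕ → Submodule k A) [GradedAlgebra 𝒜]
    (L : Type) [Field L] [Algebra k L]
    (M : Type) [AddCommGroup M] [Module L M] [Module Aᵐᵒᵖ M]
    (hbimod : ∀ (ℓ : L) (a : Aᵐᵒᵖ) (m : M), a • (ℓ • m) = ℓ • (a • m))
    (ℳ : ℕ → Submodule L M)
    (hinternal : DirectSum.IsInternal ℳ)
    (honedim : ∀ s : ℕ, Module.finrank L (ℳ s) = 1)
    (hmul : ∀ (s u : ℕ) (m : M) (a : A), m ∈ ℳ s → a ∈ 𝒜 u → (op a) • m ∈ ℳ (s + u))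
    (P : Set A)
    (hP : P = {a : A | ∀ m : M, (op a) • m = 0})
    (hPs : ∀ s : ℕ, P = {a : A | ∀ m ∈ ℳ s, (op a) • m = 0}) :
    ∀ (u v : ℕ) (a b : A), a ∈ 𝒜 u → b ∈ 𝒜 v → a ∉ P → b ∉ P → a * b ∉ P :=
  statement_10_general k A 𝒜 L M hbimod ℳ honedim hmul P hP hPs
end

section
/- Let A be a connected graded k-algebra generated in degree one, and let J be a homogeneous right ideal of A such that dim_k(A_n / J_n) = 1 for all n ≥ 0 and such that J is generated as a right ideal in degrees ≤ m₀ (i.e. J_{n+1} = J_n A_1 for all n ≥ m₀). Then for every m ≥ m₀ and every homogeneous right ideal I of A with I_n = J_n for all n ≤ m and dim_k(A_{m+1}/I_{m+1}) = 1, one has I_{m+1} = J_{m+1}. In particular, for each m ≥ m₀ the truncated point module (A/J)_{≤ m} has a unique extension to a truncated point module of length m+2. -/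
theorem Submodule.eq_of_le_of_finrank_quotient_comap_subtype_eq {K V : Type*} [Field K]
    [AddCommGroup V] [Module K V] {W P Q : Submodule K V} [FiniteDimensional K W]
    (hQW : Q ≤ W) (hPQ : P ≤ Q)
    (hcodim : Module.finrank K (W ⧸ P.comap W.subtype) =
      Module.finrank K (W ⧸ Q.comap W.subtype)) :
    P = Q := by
  have hle : P.comap W.subtype ≤ Q.comap W.subtype := Submodule.comap_mono hPQ
  have hrank : Module.finrank K (P.comap W.subtype) = Module.finrank K (Q.comap W.subtype) := by
    have hP := Submodule.finrank_quotient_add_finrank (P.comap W.subtype)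
    have hQ := Submodule.finrank_quotient_add_finrank (Q.comap W.subtype)
    omega
  have hcomap := Submodule.eq_of_le_of_finrank_eq hle hrank
  have hPW : P ≤ W := hPQ.trans hQW
  calc P = W ⊓ P := (inf_eq_right.2 hPW).symm
    _ = (P.comap W.subtype).map W.subtype := (Submodule.map_comap_subtype W P).symm
    _ = (Q.comap W.subtype).map W.subtype := by rw [hcomap]
    _ = W ⊓ Q := Submodule.map_comap_subtype W Q
    _ = Q := inf_eq_right.2 hQW

theorem statement_11_general
    (k : Type) [Field k]
    (A : Type) [Ring A] [Algebra k A]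
    (𝒜 : ℕ → Submodule k A)
    (hfd : ∀ n : ℕ, FiniteDimensional k (𝒜 n))
    (J : ℕ → Submodule k A)
    -- `dim_k (Aₙ / Jₙ) = 1` for all `n ≥ 0`
    (hJcodim : ∀ n : ℕ,
      Module.finrank k (↥(𝒜 n) ⧸ (J n).comap (𝒜 n).subtype) = 1)
    -- `J` is generated as a right ideal in degrees `≤ m₀`
    (m₀ : ℕ)
    (hJdeg : ∀ n : ℕ, m₀ ≤ n → J (n + 1) = J n * 𝒜 1) :
    ∀ m : ℕ, m₀ ≤ m →
      ∀ I : ℕ → Submodule k A,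
        (∀ n, I n ≤ 𝒜 n) →
        (∀ n m' : ℕ, I n * 𝒜 m' ≤ I (n + m')) →
        (∀ n ≤ m, I n = J n) →
        Module.finrank k (↥(𝒜 (m + 1)) ⧸ (I (m + 1)).comap (𝒜 (m + 1)).subtype) = 1 →
        I (m + 1) = J (m + 1) := by
  intro m hm I hIle hIright hIeq hIcodim
  have hJI : J (m + 1) ≤ I (m + 1) := by
    rw [hJdeg m hm, ← hIeq m le_rfl]
    exact hIright m 1
  have := hfd (m + 1)
  exact (Submodule.eq_of_le_of_finrank_quotient_comap_subtype_eq (hIle (m + 1)) hJI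
    ((hJcodim (m + 1)).trans hIcodim.symm)).symm

/-- Let `A` be a connected graded `k`-algebra generated in degree one and
`J` a homogeneous right ideal of `A` with `dim_k (Aₙ/Jₙ) = 1` for all `n`, generated as a right
ideal in degrees `≤ m₀`.  Then for every `m ≥ m₀`, any homogeneous right ideal `I` agreeing with
`J` in degrees `≤ m` and of codimension one in degree `m+1` satisfies `I_{m+1} = J_{m+1}`. -/
theorem statement_11
    (k : Type) [Field k] [IsAlgClosed k]
    (A : Type) [Ring A] [Algebra k A]
    (𝒜 : ℕ → Submodule k A) [GradedAlgebra 𝒜]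
    -- `A` is connected graded: `A₀ = k` and each `Aₙ` is finite dimensional
    (hconn : 𝒜 0 = (1 : Submodule k A))
    (hfd : ∀ n : ℕ, FiniteDimensional k (𝒜 n))
    -- `A` is generated in degree one
    (hgen1 : ∀ n : ℕ, 𝒜 (n + 1) = 𝒜 n * 𝒜 1)
    -- `J` is a homogeneous right ideal, `Jₙ = J ∩ Aₙ`
    (J : ℕ → Submodule k A)
    (hJle : ∀ n, J n ≤ 𝒜 n)
    (hJright : ∀ n m : ℕ, J n * 𝒜 m ≤ J (n + m))
    -- `dim_k (Aₙ / Jₙ) = 1` for all `n ≥ 0`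
    (hJcodim : ∀ n : ℕ,
      Module.finrank k (↥(𝒜 n) ⧸ (J n).comap (𝒜 n).subtype) = 1)
    -- `J` is generated as a right ideal in degrees `≤ m₀`
    (m₀ : ℕ)
    (hJdeg : ∀ n : ℕ, m₀ ≤ n → J (n + 1) = J n * 𝒜 1) :
    ∀ m : ℕ, m₀ ≤ m →
      ∀ I : ℕ → Submodule k A,
        (∀ n, I n ≤ 𝒜 n) →
        (∀ n m' : ℕ, I n * 𝒜 m' ≤ I (n + m')) →
        (∀ n ≤ m, I n = J n) →
        Module.finrank k (↥(𝒜 (m + 1)) ⧸ (I (m + 1)).comap (𝒜 (m + 1)).subtype) = 1 →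
        I (m + 1) = J (m + 1) :=
  statement_11_general k A 𝒜 hfd J hJcodim m₀ hJdeg
end

section
/- Let k be a field, Y a proper k-scheme, X an integral k-scheme of finite type, and π : Y → X a surjective birational morphism. Assume X carries an automorphism τ and there is a finite set P of closed points of X such that π restricts to an isomorphism π⁻¹(U) → U, where U = X ∖ P, and every point of P lies on an infinite τ-orbit (the points τ^i(p), i ∈ ℤ, are pairwise distinct for each p ∈ P). Then X is separated and proper over k. -/
open AlgebraicGeometry CategoryTheory

/-- `π` is a birational morphism: it restricts to an isomorphism between dense open
subschemes. -/
def Scheme.IsBirationalMor {Y X : AlgebraicGeometry.Scheme} (π : Y ⟶ X) : Prop :=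
  ∃ (U : Y.Opens) (V : X.Opens), Dense (U : Set Y) ∧ Dense (V : Set X) ∧
    ∃ e : U ≤ π ⁻¹ᵁ V, IsIso (π.resLE V U e)

/-!
Universal closedness descends from `Y` along the surjection `π`, and `X` is locally Noetherian,
hence quasi-separated, so separatedness follows from the uniqueness part of the valuative
criterion. A morphism from the spectrum of a valuation ring lands in every open containing the
image of the closed point, so it suffices that any two points of `X` lie in a common separated
open. The open `U = X ∖ P ≅ π⁻¹(U) ⊆ Y` is separated, and since `P` is finite and its `τ`-orbits
are infinite, some translate `τ^m(U)` contains any two given points.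
-/

open Limits

theorem Set.Finite.exists_forall_apply_notMem_of_injective {ι α : Type*} [Infinite ι]
    (σ : ι → α → α) {P F : Set α} (hP : P.Finite) (hF : F.Finite)
    (hσ : ∀ p ∈ P, Function.Injective (σ · p)) :
    ∃ i, ∀ p ∈ P, σ i p ∉ F := by
  have hbad : (⋃ p ∈ P, (σ · p) ⁻¹' F).Finite :=
    hP.biUnion fun p hp => hF.preimage (hσ p hp).injOn
  obtain ⟨i, hi⟩ := hbad.infinite_compl.nonempty
  simp only [Set.mem_compl_iff, Set.mem_iUnion, Set.mem_preimage, not_exists] at hi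
  exact ⟨i, hi⟩

namespace AlgebraicGeometry

universe u

lemma Scheme.IsSeparated.of_hom {Z Y : Scheme} (j : Z ⟶ Y) [IsSeparated j] [Y.IsSeparated] :
    Z.IsSeparated :=
  ⟨by rw [← terminal.comp_from j]; infer_instance⟩

lemma range_subset_of_closedPoint_mem {X : Scheme} {R : CommRingCat} [IsLocalRing R]
    {U : Set X} (hU : IsOpen U) (l : Spec R ⟶ X) (h : l.base (IsLocalRing.closedPoint R) ∈ U) :
    Set.range l.base ⊆ U := by
  rintro _ ⟨x, rfl⟩
  exact ((IsLocalRing.specializes_closedPoint x).map l.base.hom.2).mem_open hU h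

lemma ext_of_valuationRing_of_isSeparated {Z T : Scheme.{u}} (s : Z ⟶ T) [IsSeparated s]
    (R K : Type u) [CommRing R] [IsDomain R] [ValuationRing R] [Field K] [Algebra R K]
    [IsFractionRing R K] {g₁ g₂ : Spec (.of R) ⟶ Z} (hs : g₁ ≫ s = g₂ ≫ s)
    (hK : Spec.map (CommRingCat.ofHom (algebraMap R K)) ≫ g₁ =
      Spec.map (CommRingCat.ofHom (algebraMap R K)) ≫ g₂) : g₁ = g₂ := by
  let S : ValuativeCommSq s := ⟨R, K, Spec.map (CommRingCat.ofHom (algebraMap R K)) ≫ g₁,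
    g₁ ≫ s, ⟨Category.assoc _ _ _⟩⟩
  have := IsSeparated.valuativeCriterion s S
  exact congrArg CommSq.LiftStruct.l
    (Subsingleton.elim (α := S.commSq.LiftStruct) ⟨g₁, rfl, rfl⟩ ⟨g₂, hK.symm, hs.symm⟩)

lemma ValuativeCriterion.Uniqueness.of_forall_exists_isSeparated_opens {X Y : Scheme} (f : X ⟶ Y)
    (h : ∀ x y : X, ∃ U : X.Opens, x ∈ U ∧ y ∈ U ∧ U.toScheme.IsSeparated) :
    ValuativeCriterion.Uniqueness f := by
  intro S
  constructor
  rintro ⟨l₁, hl₁, -⟩ ⟨l₂, hl₂, -⟩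
  obtain ⟨U, h₁, h₂, hU⟩ :=
    h (l₁.base (IsLocalRing.closedPoint S.R)) (l₂.base (IsLocalRing.closedPoint S.R))
  have hr₁ : Set.range l₁.base ⊆ Set.range U.ι.base := by
    rw [U.range_ι]; exact range_subset_of_closedPoint_mem U.2 l₁ h₁
  have hr₂ : Set.range l₂.base ⊆ Set.range U.ι.base := by
    rw [U.range_ι]; exact range_subset_of_closedPoint_mem U.2 l₂ h₂
  have hl : IsOpenImmersion.lift U.ι l₁ hr₁ = IsOpenImmersion.lift U.ι l₂ hr₂ :=
    ext_of_valuationRing_of_isSeparated (terminal.from U.toScheme) S.R S.K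
      (terminal.hom_ext _ _) <| by
      rw [← cancel_mono U.ι]
      simp only [Category.assoc, IsOpenImmersion.lift_fac]
      exact hl₁.trans hl₂.symm
  ext : 1
  change l₁ = l₂
  rw [← IsOpenImmersion.lift_fac U.ι l₁ hr₁, ← IsOpenImmersion.lift_fac U.ι l₂ hr₂, hl]

lemma exists_isSeparated_opens_mem_of_injective_orbits {X : Scheme} (V : X.Opens)
    [V.toScheme.IsSeparated] (τ : Aut X) (hV : (V : Set X)ᶜ.Finite)
    (horb : ∀ p ∉ V, Function.Injective fun i : ℤ => (τ ^ i).hom.base p) (x y : X) :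
    ∃ U : X.Opens, x ∈ U ∧ y ∈ U ∧ U.toScheme.IsSeparated := by
  obtain ⟨m, hm⟩ := hV.exists_forall_apply_notMem_of_injective (fun i p => (τ ^ i).hom.base p)
    (Set.toFinite {x, y}) horb
  set σ : X ≅ X := τ ^ m
  have hmem : ∀ z ∈ ({x, y} : Set X), z ∈ σ.inv ⁻¹ᵁ V := fun z hz =>
    by_contra fun h => hm _ h (by simpa [← Scheme.Hom.comp_apply] using hz)
  exact ⟨_, hmem x (by simp), hmem y (by simp), Scheme.IsSeparated.of_hom (σ.inv ∣_ V)⟩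

end AlgebraicGeometry

theorem statement_12_general
    (k : Type) [Field k]
    (Y X : AlgebraicGeometry.Scheme)
    (sY : Y ⟶ Spec (CommRingCat.of k)) (sX : X ⟶ Spec (CommRingCat.of k))
    [IsProper sY]
    [LocallyOfFiniteType sX] [QuasiCompact sX]
    (π : Y ⟶ X) (hπk : π ≫ sX = sY)
    (hsurj : Function.Surjective π.base)
    (τ : Aut X)
    (P : Set X) (hPfin : P.Finite)
    (hPclosed : ∀ p ∈ P, IsClosed ({p} : Set X))
    -- `π` restricts to an isomorphism `π⁻¹(U) → U` where `U = X ∖ P`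
    (hisoU : ∀ V : X.Opens, (V : Set X) = Pᶜ → IsIso (π.resLE V (π ⁻¹ᵁ V) le_rfl))
    -- every point of `P` lies on an infinite `τ`-orbit
    (horb : ∀ p ∈ P, ∀ i j : ℤ, i ≠ j → (τ ^ i).hom.base p ≠ (τ ^ j).hom.base p) :
    IsSeparated sX ∧ IsProper sX := by
  have : Surjective π := ⟨hsurj⟩
  have : UniversallyClosed (π ≫ sX) := hπk ▸ inferInstance
  have : UniversallyClosed sX := .of_comp_surjective π sX
  have : IsLocallyNoetherian X := LocallyOfFiniteType.isLocallyNoetherian sX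
  have : Y.IsSeparated := Scheme.IsSeparated.of_hom sY
  have hP : IsClosed P := by simpa using hPfin.isClosed_biUnion hPclosed
  let V : X.Opens := ⟨Pᶜ, hP.isOpen_compl⟩
  have := hisoU V rfl
  have : V.toScheme.IsSeparated :=
    Scheme.IsSeparated.of_hom (inv (π.resLE V (π ⁻¹ᵁ V) le_rfl) ≫ (π ⁻¹ᵁ V).ι)
  have horb' : ∀ p ∉ V, Function.Injective fun i : ℤ => (τ ^ i).hom.base p :=
    fun p hp i j hij => by_contra (horb p (by simpa [V] using hp) i j · hij)
  have hsep : IsSeparated sX := .of_valuativeCriterion sX <|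
    .of_forall_exists_isSeparated_opens sX <|
      exists_isSeparated_opens_mem_of_injective_orbits V τ (by simpa [V] using hPfin) horb'
  exact ⟨hsep, ⟨⟩⟩

/-- Let `k` be a field, `Y` a proper `k`-scheme, `X` an integral `k`-scheme
of finite type, and `π : Y → X` a surjective birational morphism.  Assume `X` carries an
automorphism `τ` and there is a finite set `P` of closed points of `X` such that `π` restricts
to an isomorphism `π⁻¹(U) → U`, where `U = X ∖ P`, and every point of `P` lies on an infinite
`τ`-orbit.  Then `X` is separated and proper over `k`. -/
theorem statement_12
    (k : Type) [Field k]
    (Y X : AlgebraicGeometry.Scheme)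
    (sY : Y ⟶ Spec (CommRingCat.of k)) (sX : X ⟶ Spec (CommRingCat.of k))
    [IsProper sY]
    [IsIntegral X] [LocallyOfFiniteType sX] [QuasiCompact sX]
    (π : Y ⟶ X) (hπk : π ≫ sX = sY)
    (hsurj : Function.Surjective π.base)
    (hbir : Scheme.IsBirationalMor π)
    (τ : Aut X)
    (P : Set X) (hPfin : P.Finite)
    (hPclosed : ∀ p ∈ P, IsClosed ({p} : Set X))
    -- `π` restricts to an isomorphism `π⁻¹(U) → U` where `U = X ∖ P`
    (hisoU : ∀ V : X.Opens, (V : Set X) = Pᶜ → IsIso (π.resLE V (π ⁻¹ᵁ V) le_rfl))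
    -- every point of `P` lies on an infinite `τ`-orbit
    (horb : ∀ p ∈ P, ∀ i j : ℤ, i ≠ j → (τ ^ i).hom.base p ≠ (τ ^ j).hom.base p) :
    IsSeparated sX ∧ IsProper sX :=
  statement_12_general k Y X sY sX π hπk hsurj τ P hPfin hPclosed hisoU horb
end
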